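/- Let K, D, λ be positive integers such that λ divides D, D divides K − λ, and n = (K−λ)/D > 1. Consider the index coding problem over GF(2) where receiver R_k demands x_k with side information {x_{k+D}} if k ≤ K − D − λ and {x_{k+λ}, x_{k+2λ}, ..., x_{k+D}} if K − D − λ < k ≤ K (indices mod K in {1,...,K}). Then the code consisting of the D(n−1) symbols x_{i+(j−1)D} + x_{i+jD} for i = 1,...,D, j = 1,...,n−1, together with the λ symbols x_{K−λ+r} + x_{K−λ+r−λ} + ... + x_{K−λ+r−(D/λ)λ} for r = 1,...,λ, has length exactly K − D and allows every receiver to decode its demanded message. -/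
import Mathlib


/-- Standard basis vector over GF(2) for message index `k` (messages indexed by `ZMod K`,
i.e. index arithmetic is modulo `K`). -/
def e (K : ℕ) (k : ZMod K) : ZMod K → ZMod 2 := Pi.single k 1

/-- Receiver `k` can decode its demanded message `x_k`: the demand vector lies in the GF(2)-span
of the broadcast code symbols `C` together with its side-information messages `side`. -/
def Decodes (K : ℕ) (C : Set (ZMod K → ZMod 2)) (side : Set (ZMod K)) (k : ZMod K) : Prop :=
  e K k ∈ Submodule.span (ZMod 2) (C ∪ e K '' side)

/-- A 0-1 matrix over GF(2) fits the directed graph with edge relation `E`: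
unit diagonal, and zero outside the diagonal and edge set. -/
def Fits {V : Type*} (E : V → V → Prop) (A : Matrix V V (ZMod 2)) : Prop :=
  (∀ i, A i i = 1) ∧ ∀ i j, i ≠ j → ¬ E i j → A i j = 0

private lemma zadd_self {K : ℕ} (v : ZMod K → ZMod 2) : v + v = 0 := by
  funext t
  have h : ∀ a : ZMod 2, a + a = 0 := by decide
  exact h (v t)

private lemma zcancel {K : ℕ} (x y : ZMod K → ZMod 2) : x + y + y = x := by
  rw [add_assoc, zadd_self, add_zero]

private lemma zcancel' {K : ℕ} (x y : ZMod K → ZMod 2) : x + y + x = y := by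
  rw [add_comm x y]; exact zcancel y x

private lemma ztri {K : ℕ} (x y z : ZMod K → ZMod 2) : (x + y) + (y + z) = x + z := by
  rw [add_assoc, ← add_assoc y y z, zadd_self, zero_add]

/-- Case V code has length exactly `K-D` and every receiver decodes. -/
theorem stmt5 (K D lam n : ℕ) (hlam : 0 < lam) (hl : lam ∣ D) (hd : D ∣ (K - lam))
    (hlamK : lam < K) (hn : n = (K - lam) / D) (hn1 : 1 < n) :
    D * (n - 1) + lam = K - D ∧
    (∀ k : ℕ, 1 ≤ k → k ≤ K →
      Decodes K
        ({v | ∃ i j : ℕ, 1 ≤ i ∧ i ≤ D ∧ 1 ≤ j ∧ j ≤ n - 1 ∧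
            v = e K ((i + (j - 1) * D : ℕ) : ZMod K) + e K ((i + j * D : ℕ) : ZMod K)} ∪
         {v | ∃ r : ℕ, 1 ≤ r ∧ r ≤ lam ∧
            v = ∑ t ∈ Finset.range (D / lam + 1), e K (((K - lam + r) - t * lam : ℕ) : ZMod K)})
        (if k ≤ K - D - lam then {((k + D : ℕ) : ZMod K)}
         else {j | ∃ t : ℕ, 1 ≤ t ∧ t ≤ D / lam ∧ j = ((k + t * lam : ℕ) : ZMod K)})
        ((k : ℕ) : ZMod K)) := by
  obtain ⟨m, hm⟩ := hl
  have hD0 : 0 < D := by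
    rcases Nat.eq_zero_or_pos D with h | h
    · rw [h, Nat.div_zero] at hn; omega
    · exact h
  have hm1 : 1 ≤ m := by
    rcases Nat.eq_zero_or_pos m with h | h
    · rw [h, mul_zero] at hm; omega
    · exact h
  have hKn : K - lam = D * n := by rw [hn, Nat.mul_div_cancel' hd]
  have hK : K = D * n + lam := by rw [← hKn]; omega
  have hDm : D / lam = m := by rw [hm, Nat.mul_div_cancel_left _ hlam]
  obtain ⟨A, hA⟩ : ∃ A, A = D * (n - 1) := ⟨_, rfl⟩
  have hDn : D * n = D * (n - 1) + D := by
    have h : n - 1 + 1 = n := by omega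
    calc D * n = D * ((n - 1) + 1) := by rw [h]
      _ = D * (n - 1) + D := by ring
  have hK2 : K = A + D + lam := by rw [hA, ← hDn]; exact hK
  constructor
  · rw [← hA]; omega
  · intro k hk1 hkK
    have hKA : K - D - lam = A := by omega
    by_cases hcase : k ≤ K - D - lam
    · -- easy receivers: side information x_{k+D}
      rw [if_pos hcase]
      unfold Decodes
      have hkA : k ≤ A := by omega
      obtain ⟨q1, hq1d⟩ : ∃ q1, q1 = (k - 1) / D := ⟨_, rfl⟩
      obtain ⟨r1, hr1d⟩ : ∃ r1, r1 = (k - 1) % D := ⟨_, rfl⟩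
      have hdm1 : D * q1 + r1 = k - 1 := by rw [hq1d, hr1d]; exact Nat.div_add_mod _ _
      have hr1D : r1 < D := by rw [hr1d]; exact Nat.mod_lt _ hD0
      have hk' : k = D * q1 + r1 + 1 := by rw [hdm1]; omega
      have hq1 : q1 < n - 1 := by
        rw [hq1d]
        apply (Nat.div_lt_iff_lt_mul hD0).mpr
        have h1 : (n - 1) * D = A := by rw [hA]; ring
        omega
      have hgen : e K ((k : ℕ) : ZMod K) + e K ((k + D : ℕ) : ZMod K) ∈
          ({v : ZMod K → ZMod 2 | ∃ i j : ℕ, 1 ≤ i ∧ i ≤ D ∧ 1 ≤ j ∧ j ≤ n - 1 ∧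
            v = e K ((i + (j - 1) * D : ℕ) : ZMod K) + e K ((i + j * D : ℕ) : ZMod K)}) := by
        refine ⟨r1 + 1, q1 + 1, by omega, by omega, by omega, by omega, ?_⟩
        have e1 : r1 + 1 + (q1 + 1 - 1) * D = k := by
          simp only [Nat.add_sub_cancel]
          rw [hk']; ring
        have e2 : r1 + 1 + (q1 + 1) * D = k + D := by rw [hk']; ring
        rw [e1, e2]
      have hmem2 : e K ((k + D : ℕ) : ZMod K) ∈
          e K '' ({((k + D : ℕ) : ZMod K)} : Set (ZMod K)) := ⟨_, rfl, rfl⟩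
      have key : e K ((k : ℕ) : ZMod K) =
          (e K ((k : ℕ) : ZMod K) + e K ((k + D : ℕ) : ZMod K)) + e K ((k + D : ℕ) : ZMod K) :=
        (zcancel _ _).symm
      rw [key]
      exact Submodule.add_mem _
        (Submodule.subset_span (Set.mem_union_left _ (Set.mem_union_left _ hgen)))
        (Submodule.subset_span (Set.mem_union_right _ hmem2))
    · -- hard receivers
      rw [if_neg hcase]
      unfold Decodes
      have hkgt : A + 1 ≤ k := by omega
      obtain ⟨q, hqd⟩ : ∃ q, q = (k - A - 1) / lam := ⟨_, rfl⟩
      obtain ⟨rr, hrrd⟩ : ∃ rr, rr = (k - A - 1) % lam := ⟨_, rfl⟩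
      have hdm2 : lam * q + rr = k - A - 1 := by rw [hqd, hrrd]; exact Nat.div_add_mod _ _
      have hrrlam : rr < lam := by rw [hrrd]; exact Nat.mod_lt _ hlam
      obtain ⟨r, hrd⟩ : ∃ r, r = rr + 1 := ⟨_, rfl⟩
      have hr1 : 1 ≤ r := by omega
      have hrlam : r ≤ lam := by omega
      have hk2 : k = A + lam * q + r := by
        have h1 : A + lam * q + r = A + (lam * q + rr) + 1 := by rw [hrd]; ring
        rw [h1, hdm2]; omega
      have hqm : q ≤ m := by
        have hml : (m + 1) * lam = D + lam := by rw [hm]; ring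
        have h2 : q < m + 1 := by
          rw [hqd]
          apply (Nat.div_lt_iff_lt_mul hlam).mpr
          omega
        omega
      -- chain lemma
      have hchain : ∀ w : ℕ, w ≤ n - 1 → ∀ b : ℕ, 1 ≤ b → b ≤ D →
          e K ((b : ℕ) : ZMod K) + e K ((b + w * D : ℕ) : ZMod K) ∈
          Submodule.span (ZMod 2)
            {v : ZMod K → ZMod 2 | ∃ i j : ℕ, 1 ≤ i ∧ i ≤ D ∧ 1 ≤ j ∧ j ≤ n - 1 ∧
              v = e K ((i + (j - 1) * D : ℕ) : ZMod K) + e K ((i + j * D : ℕ) : ZMod K)} := by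
        intro w
        induction w with
        | zero =>
          intro _ b hb1 hbD
          simp only [Nat.zero_mul, Nat.add_zero]
          rw [zadd_self]
          exact Submodule.zero_mem _
        | succ w ih =>
          intro hw b hb1 hbD
          have h1 := ih (by omega) b hb1 hbD
          have h2 : e K ((b + w * D : ℕ) : ZMod K) + e K ((b + (w + 1) * D : ℕ) : ZMod K) ∈
              ({v : ZMod K → ZMod 2 | ∃ i j : ℕ, 1 ≤ i ∧ i ≤ D ∧ 1 ≤ j ∧ j ≤ n - 1 ∧
                v = e K ((i + (j - 1) * D : ℕ) : ZMod K) + e K ((i + j * D : ℕ) : ZMod K)}) := by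
            refine ⟨b, w + 1, hb1, hbD, by omega, by omega, ?_⟩
            simp only [Nat.add_sub_cancel]
          have := Submodule.add_mem _ h1 (Submodule.subset_span h2)
          rwa [ztri] at this
      -- reindex the long code symbol
      have hterm : ∀ t ∈ Finset.range (m + 1),
          e K (((K - lam + r) - t * lam : ℕ) : ZMod K)
            = e K ((A + lam * (m - t) + r : ℕ) : ZMod K) := by
        intro t ht
        have htm : t ≤ m := by
          have := Finset.mem_range.mp ht
          omega
        have h4 : K - lam = A + D := by omega
        have h5 : t + (m - t) = m := by omega
        have hx : t * lam + lam * (m - t) = lam * m := by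
          calc t * lam + lam * (m - t) = lam * (t + (m - t)) := by ring
            _ = lam * m := by rw [h5]
        have h6 : (K - lam + r) - t * lam = A + lam * (m - t) + r := by
          rw [h4, hm, ← hx]
          generalize t * lam = X
          generalize lam * (m - t) = Y
          omega
        rw [h6]
      have hq_in : q ∈ Finset.range (m + 1) := Finset.mem_range.mpr (by omega)
      have hS1 : (∑ t ∈ Finset.range (D / lam + 1),
            e K (((K - lam + r) - t * lam : ℕ) : ZMod K))
          = ∑ u ∈ Finset.range (m + 1), e K ((A + lam * u + r : ℕ) : ZMod K) := by
        rw [hDm]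
        rw [Finset.sum_congr rfl hterm]
        have := Finset.sum_range_reflect (fun u => e K ((A + lam * u + r : ℕ) : ZMod K)) (m + 1)
        simpa using this
      have hS2 : (∑ u ∈ Finset.range (m + 1), e K ((A + lam * u + r : ℕ) : ZMod K))
          = e K ((A + lam * q + r : ℕ) : ZMod K) +
            ∑ u ∈ (Finset.range (m + 1)).erase q, e K ((A + lam * u + r : ℕ) : ZMod K) :=
        (Finset.add_sum_erase _ _ hq_in).symm
      have hfin : e K ((k : ℕ) : ZMod K)
          = (∑ t ∈ Finset.range (D / lam + 1),
              e K (((K - lam + r) - t * lam : ℕ) : ZMod K)) +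
            ∑ u ∈ (Finset.range (m + 1)).erase q, e K ((A + lam * u + r : ℕ) : ZMod K) := by
        rw [hS1, hS2, zcancel, hk2]
      rw [hfin]
      refine Submodule.add_mem _
        (Submodule.subset_span
          (Set.mem_union_left _ (Set.mem_union_right _ ⟨r, hr1, hrlam, rfl⟩)))
        (Submodule.sum_mem _ ?_)
      intro u hu
      have hune : u ≠ q := Finset.ne_of_mem_erase hu
      have hum : u < m + 1 := Finset.mem_range.mp (Finset.mem_of_mem_erase hu)
      rcases Nat.lt_or_ge u q with hlt | hge
      · -- u < q : chain symbols plus wrapped-around side information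
        obtain ⟨t, htd⟩ : ∃ t, t = m + 1 + u - q := ⟨_, rfl⟩
        have ht1 : 1 ≤ t := by omega
        have htm : t ≤ m := by omega
        have hqt : q + t = m + 1 + u := by omega
        have hw : k + t * lam = K + (lam * u + r) := by
          calc k + t * lam = (A + lam * q + r) + t * lam := by rw [hk2]
            _ = A + lam * (q + t) + r := by ring
            _ = A + lam * (m + 1 + u) + r := by rw [hqt]
            _ = (A + D + lam) + (lam * u + r) := by rw [hm]; ring
            _ = K + (lam * u + r) := by rw [← hK2]
        have hcast : ((k + t * lam : ℕ) : ZMod K) = ((lam * u + r : ℕ) : ZMod K) := by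
          rw [hw, Nat.cast_add, ZMod.natCast_self, zero_add]
        have hb1 : 1 ≤ lam * u + r := le_trans hr1 (Nat.le_add_left r (lam * u))
        have hbD : lam * u + r ≤ D := by
          have h7 : u ≤ m - 1 := by omega
          calc lam * u + r ≤ lam * (m - 1) + lam :=
              add_le_add (Nat.mul_le_mul_left _ h7) hrlam
            _ = lam * (m - 1 + 1) := by ring
            _ = lam * m := by rw [show m - 1 + 1 = m by omega]
            _ = D := hm.symm
        have hch := hchain (n - 1) le_rfl (lam * u + r) hb1 hbD
        have hidx : (A + lam * u + r : ℕ) = (lam * u + r) + (n - 1) * D := by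
          rw [hA]; ring
        have hside : e K ((lam * u + r : ℕ) : ZMod K) ∈
            e K '' {j : ZMod K | ∃ t : ℕ, 1 ≤ t ∧ t ≤ D / lam ∧
              j = ((k + t * lam : ℕ) : ZMod K)} :=
          ⟨((k + t * lam : ℕ) : ZMod K), ⟨t, ht1, by rw [hDm]; exact htm, rfl⟩, by rw [hcast]⟩
        have hgu : e K ((A + lam * u + r : ℕ) : ZMod K)
            = (e K ((lam * u + r : ℕ) : ZMod K) +
               e K (((lam * u + r) + (n - 1) * D : ℕ) : ZMod K)) +
              e K ((lam * u + r : ℕ) : ZMod K) := by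
          rw [hidx, zcancel']
        rw [hgu]
        exact Submodule.add_mem _
          (Submodule.span_mono (fun x hx => Set.mem_union_left _ (Set.mem_union_left _ hx)) hch)
          (Submodule.subset_span (Set.mem_union_right _ hside))
      · -- u > q : direct side information
        have hlt' : q < u := by omega
        obtain ⟨t, htd⟩ : ∃ t, t = u - q := ⟨_, rfl⟩
        have ht1 : 1 ≤ t := by omega
        have htm : t ≤ m := by omega
        have hqt : q + t = u := by omega
        have hw : k + t * lam = A + lam * u + r := by
          calc k + t * lam = (A + lam * q + r) + t * lam := by rw [hk2]
            _ = A + lam * (q + t) + r := by ring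
            _ = A + lam * u + r := by rw [hqt]
        have hside : e K ((A + lam * u + r : ℕ) : ZMod K) ∈
            e K '' {j : ZMod K | ∃ t : ℕ, 1 ≤ t ∧ t ≤ D / lam ∧
              j = ((k + t * lam : ℕ) : ZMod K)} :=
          ⟨((k + t * lam : ℕ) : ZMod K), ⟨t, ht1, by rw [hDm]; exact htm, rfl⟩, by rw [hw]⟩
        exact Submodule.subset_span (Set.mem_union_right _ hside)
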